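/- arXiv:2505.05751 — 5 statements merged into one kernel-verified Lean document; each statement's English description precedes it below -/
import Mathlib

section
/- In Dilithium-style signing, if the masking vector y has all coefficients bounded by γ1 − 1 in absolute value and c·s1 has all coefficients bounded by β, then z = y + c·s1 has all coefficients bounded by γ1 + β − 1; conversely, conditioned on ‖z‖_∞ ≤ γ1 − β − 1 and ‖c·s1‖_∞ ≤ β, the value z is independent of s1 in the sense that for every z0 with ‖z0‖_∞ ≤ γ1 − β − 1 and every s1 there is exactly one y with ‖y‖_∞ ≤ γ1 − 1 such that z0 = y + c·s1. -/
/-- Dilithium masking: (1) if `‖y‖_∞ ≤ γ1 - 1` and `‖c·s1‖_∞ ≤ β` then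
`‖y + c·s1‖_∞ ≤ γ1 + β - 1`; (2) conversely, for every `z0` with
`‖z0‖_∞ ≤ γ1 - β - 1` there is exactly one `y` with `‖y‖_∞ ≤ γ1 - 1` and
`z0 = y + c·s1`, so `z` is independent of `s1`. -/
theorem dilithium_mask_bounds (m : ℕ) (γ1 β : ℤ) (hβ : 0 < β) (hβγ : β < γ1)
    (cs1 : Fin m → ℤ) (hcs1 : ∀ i, |cs1 i| ≤ β) :
    (∀ y : Fin m → ℤ, (∀ i, |y i| ≤ γ1 - 1) →
        ∀ i, |y i + cs1 i| ≤ γ1 + β - 1) ∧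
      (∀ z0 : Fin m → ℤ, (∀ i, |z0 i| ≤ γ1 - β - 1) →
        ∃! y : Fin m → ℤ, (∀ i, |y i| ≤ γ1 - 1) ∧ z0 = y + cs1) := by
  constructor
  · intro y hy i
    calc |y i + cs1 i| ≤ |y i| + |cs1 i| := abs_add_le _ _
    _ ≤ (γ1 - 1) + β := add_le_add (hy i) (hcs1 i)
    _ = γ1 + β - 1 := by ring
  · intro z0 hz0
    refine ⟨z0 - cs1, ⟨fun i => ?_, by funext i; simp⟩, ?_⟩
    · have := hz0 i; have := hcs1 i
      simp only [Pi.sub_apply]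
      have := abs_sub (z0 i) (cs1 i)
      calc |z0 i - cs1 i| ≤ |z0 i| + |cs1 i| := abs_sub _ _
      _ ≤ (γ1 - β - 1) + β := add_le_add (hz0 i) (hcs1 i)
      _ = γ1 - 1 := by ring
    · rintro y ⟨hy, rfl⟩
      funext i; simp
end

section
/- Let z ∈ ℤ^m be uniform on the box {v : ‖v‖_∞ ≤ γ1 − 1} shifted by a fixed vector u with ‖u‖_∞ ≤ β. Then conditioned on the event ‖z‖_∞ ≤ γ1 − β − 1, the distribution of z is uniform on {v : ‖v‖_∞ ≤ γ1 − β − 1} and does not depend on u. -/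
open MeasureTheory ProbabilityTheory
open scoped ENNReal

lemma map_add_uniform_apply {m : ℕ} (B : Finset (Fin m → ℤ)) (hB : B.Nonempty)
    (u : Fin m → ℤ) (v : Fin m → ℤ) :
    ((PMF.uniformOfFinset B hB).map (fun y => y + u)) v =
      if v - u ∈ B then (B.card : ℝ≥0∞)⁻¹ else 0 := by
  classical
  rw [PMF.map_apply]
  rw [tsum_eq_single (v - u) ?_]
  · simp [PMF.uniformOfFinset_apply]
  · intro a ha
    rw [if_neg fun h => ha (by rw [h]; abel)]

lemma map_add_uniform_toMeasure_finset {m : ℕ} (B : Finset (Fin m → ℤ)) (hB : B.Nonempty)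
    (u : Fin m → ℤ) (T : Finset (Fin m → ℤ)) (hT : ∀ v ∈ T, v - u ∈ B) :
    ((PMF.uniformOfFinset B hB).map (fun y => y + u)).toMeasure (T : Set (Fin m → ℤ)) =
      (T.card : ℝ≥0∞) * (B.card : ℝ≥0∞)⁻¹ := by
  rw [PMF.toMeasure_apply_finset]
  rw [Finset.sum_congr rfl (fun v hv => by
    rw [map_add_uniform_apply, if_pos (hT v hv)])]
  simp [mul_comm]

/-- Let `y` be uniform on the box `{v : ‖v‖_∞ ≤ γ1 - 1}` and `z = y + u` with
`‖u‖_∞ ≤ β`.  Conditioned on `‖z‖_∞ ≤ γ1 - β - 1`, the distribution of `z` is uniform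
on the box `{v : ‖v‖_∞ ≤ γ1 - β - 1}`, independently of `u`. -/
theorem shifted_box_conditioned_uniform (m : ℕ) (γ1 β : ℤ)
    (hβ : 0 < β) (hβγ : β < γ1) (u : Fin m → ℤ) (hu : ∀ i, |u i| ≤ β) :
    (((PMF.uniformOfFinset
          (Fintype.piFinset fun _ : Fin m => Finset.Icc (-(γ1 - 1)) (γ1 - 1))
          (by refine ⟨fun _ => 0, ?_⟩; simp only [Fintype.mem_piFinset, Finset.mem_Icc]
              intro i; omega)).map (fun y => y + u)).toMeasure)[|
        ((Fintype.piFinset fun _ : Fin m =>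
          Finset.Icc (-(γ1 - β - 1)) (γ1 - β - 1) : Finset (Fin m → ℤ)) : Set (Fin m → ℤ))] =
      (PMF.uniformOfFinset
          (Fintype.piFinset fun _ : Fin m => Finset.Icc (-(γ1 - β - 1)) (γ1 - β - 1))
          (by refine ⟨fun _ => 0, ?_⟩; simp only [Fintype.mem_piFinset, Finset.mem_Icc]
              intro i; omega)).toMeasure := by
  classical
  set S : Finset (Fin m → ℤ) :=
    Fintype.piFinset fun _ : Fin m => Finset.Icc (-(γ1 - β - 1)) (γ1 - β - 1) with hSdef
  set B : Finset (Fin m → ℤ) :=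
    Fintype.piFinset fun _ : Fin m => Finset.Icc (-(γ1 - 1)) (γ1 - 1) with hBdef
  have hB : B.Nonempty := ⟨fun _ => 0, by
    simp only [hBdef, Fintype.mem_piFinset, Finset.mem_Icc]; intro i; omega⟩
  have hS : S.Nonempty := ⟨fun _ => 0, by
    simp only [hSdef, Fintype.mem_piFinset, Finset.mem_Icc]; intro i; omega⟩
  have hsub : ∀ v ∈ S, v - u ∈ B := by
    intro v hv
    simp only [hSdef, hBdef, Fintype.mem_piFinset, Finset.mem_Icc] at *
    intro i
    have h1 := hv i
    have h2 := hu i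
    have := abs_le.mp h2
    constructor <;> simp [Pi.sub_apply] <;> omega
  have hSmeas : MeasurableSet (S : Set (Fin m → ℤ)) := S.measurableSet
  have hc0 : ((B.card : ℝ≥0∞))⁻¹ ≠ 0 := by simp
  have hctop : ((B.card : ℝ≥0∞))⁻¹ ≠ ⊤ := by
    simp [Finset.card_ne_zero_of_mem hB.choose_spec]
  have hScard : (S.card : ℝ≥0∞) ≠ 0 := by
    simp [Finset.card_ne_zero_of_mem hS.choose_spec]
  ext t ht
  rw [ProbabilityTheory.cond_apply hSmeas]
  have hcap : (S : Set (Fin m → ℤ)) ∩ t = ((S.filter (· ∈ t) : Finset _) : Set _) := by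
    ext v; simp [Finset.mem_filter, Set.mem_inter_iff]
  rw [hcap, map_add_uniform_toMeasure_finset B hB u _ (fun v hv => hsub v (Finset.mem_filter.mp hv).1),
    map_add_uniform_toMeasure_finset B hB u S hsub,
    PMF.toMeasure_uniformOfFinset_apply hS t ht]
  rw [ENNReal.mul_inv (Or.inl hScard) (Or.inl (by simp)), div_eq_mul_inv]
  calc (S.card : ℝ≥0∞)⁻¹ * ((B.card : ℝ≥0∞)⁻¹)⁻¹ * (((S.filter (· ∈ t)).card : ℝ≥0∞) * (B.card : ℝ≥0∞)⁻¹)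
      = ((S.filter (· ∈ t)).card : ℝ≥0∞) * (S.card : ℝ≥0∞)⁻¹ *
        (((B.card : ℝ≥0∞)⁻¹)⁻¹ * (B.card : ℝ≥0∞)⁻¹) := by ring
    _ = ((S.filter (· ∈ t)).card : ℝ≥0∞) * (S.card : ℝ≥0∞)⁻¹ := by
        rw [ENNReal.inv_mul_cancel hc0 hctop, mul_one]
end

section
/- HighBits stability under small perturbations: for even α > 0 and integers r, s with ‖s‖ meaning |s| ≤ β and LowBits(r, α) in the range (−α/2 + β, α/2 − β], we have HighBits(r + s, α) = HighBits(r, α). -/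
/-- The centered residue mod `α`: the unique `r0 ≡ r (mod α)` with `-α/2 < r0 ≤ α/2`
(for even positive `α`). -/
def lowBits (r α : ℤ) : ℤ := α / 2 - (α / 2 - r) % α

/-- `HighBits(r, α) = (r - LowBits(r, α)) / α`. -/
def highBits (r α : ℤ) : ℤ := (r - lowBits r α) / α

/-- HighBits stability under small perturbations: if `|s| ≤ β`, `2β < α`, and
`LowBits(r, α) ∈ (-α/2 + β, α/2 - β]`, then `HighBits(r + s, α) = HighBits(r, α)`. -/
theorem highBits_stable (α β r s : ℤ) (hα : 0 < α) (heven : 2 ∣ α)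
    (hβ : 0 ≤ β) (hβα : 2 * β < α) (hs : |s| ≤ β)
    (hlo : -(α / 2) + β < lowBits r α) (hhi : lowBits r α ≤ α / 2 - β) :
    highBits (r + s) α = highBits r α := by
  obtain ⟨m, rfl⟩ := heven
  have hm : (2 * m) / 2 = m := by omega
  rw [lowBits, hm] at hlo hhi
  have hs1 : -β ≤ s := neg_le_of_abs_le hs
  have hs2 : s ≤ β := le_of_abs_le hs
  have key : (m - (r + s)) % (2 * m) = (m - r) % (2 * m) - s := by
    have h1 : 0 ≤ (m - r) % (2 * m) - s := by omega
    have h2 : (m - r) % (2 * m) - s < 2 * m := by omega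
    have : (m - (r + s)) % (2 * m) = ((m - r) % (2 * m) - s) % (2 * m) := by
      conv_lhs => rw [show m - (r + s) = (m - r) - s by ring]
      rw [Int.sub_emod, Int.sub_emod ((m - r) % (2 * m)) s, Int.emod_emod_of_dvd _ dvd_rfl]
    rw [this, Int.emod_eq_of_lt h1 h2]
  have hlow : lowBits (r + s) (2 * m) = lowBits r (2 * m) + s := by
    simp only [lowBits, hm, key]; ring
  simp only [highBits, hlow]
  ring_nf
end

section
/- Gaussian mechanism privacy bound (one-dimensional): for a query f : D → ℝ with sensitivity Δ (|f(x) − f(x')| ≤ Δ for adjacent x, x'), adding noise N(0, σ²) with σ ≥ Δ·√(2 ln(1.25/δ))/ε yields, for all measurable S, P[f(x)+N ∈ S] ≤ e^ε · P[f(x')+N ∈ S] + δ, i.e., (ε, δ)-differential privacy, for ε ∈ (0,1). -/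
open MeasureTheory ProbabilityTheory

lemma nnreal_coe_mk' (a : ℝ) (ha : 0 ≤ a) :
    NNReal.toReal (@Subtype.mk ℝ (fun r => 0 ≤ r) a ha) = a := rfl

open Set in

lemma var_ne (σ : ℝ) (hσ : 0 < σ) : (⟨σ ^ 2, sq_nonneg σ⟩ : NNReal) ≠ 0 := by
  intro h
  have := congrArg NNReal.toReal h
  simp only [NNReal.coe_mk, nnreal_coe_mk', NNReal.coe_zero] at this
  exact (by positivity : (0:ℝ) < σ ^ 2).ne' this

open Set in
lemma gauss_half (a σ : ℝ) (hσ : 0 < σ) :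
    ∫ x in Ici a, gaussianPDFReal a (⟨σ ^ 2, sq_nonneg σ⟩ : NNReal) x = 1 / 2 := by
  have h := (measurePreserving_add_right (volume : Measure ℝ) a).setIntegral_preimage_emb
    (measurableEmbedding_addRight a)
    (gaussianPDFReal a (⟨σ ^ 2, sq_nonneg σ⟩ : NNReal)) (Ici a)
  have hpre : (fun x : ℝ => x + a) ⁻¹' (Ici a) = Ici 0 := by
    ext y; simp
  rw [← h, hpre]
  have : ∀ x : ℝ, gaussianPDFReal a (⟨σ ^ 2, sq_nonneg σ⟩ : NNReal) (x + a)
      = (Real.sqrt (2 * Real.pi * σ ^ 2))⁻¹ * Real.exp (-(2 * σ ^ 2)⁻¹ * x ^ 2) := by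
    intro x
    simp only [gaussianPDFReal, NNReal.coe_mk, nnreal_coe_mk']
    ring_nf
  simp_rw [this]
  rw [integral_const_mul, integral_Ici_eq_integral_Ioi, integral_gaussian_Ioi]
  have h2 : Real.pi / (2 * σ ^ 2)⁻¹ = 2 * Real.pi * σ ^ 2 := by
    field_simp
  rw [h2]
  have h3 : (0:ℝ) < Real.sqrt (2 * Real.pi * σ ^ 2) := Real.sqrt_pos.2 (by positivity)
  field_simp

open Set in
lemma gauss_Ici_self (a σ : ℝ) (hσ : 0 < σ) :
    gaussianReal a (⟨σ ^ 2, sq_nonneg σ⟩ : NNReal) (Ici a) = ENNReal.ofReal (1 / 2) := by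
  rw [gaussianReal_apply_eq_integral _ (var_ne σ hσ), gauss_half a σ hσ]

-- tail bound

open Set in
lemma gauss_tail (a σ t : ℝ) (hσ : 0 < σ) (ht : 0 ≤ t) :
    gaussianReal a (⟨σ ^ 2, sq_nonneg σ⟩ : NNReal) (Ici (a + t))
      ≤ ENNReal.ofReal (Real.exp (-t ^ 2 / (2 * σ ^ 2)) / 2) := by
  set v : NNReal := ⟨σ ^ 2, sq_nonneg σ⟩ with hv
  rw [gaussianReal_apply_eq_integral _ (var_ne σ hσ)]
  apply ENNReal.ofReal_le_ofReal
  have key : ∫ y in Ici (a + t), gaussianPDFReal a v y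
      ≤ ∫ y in Ici (a + t), Real.exp (-t ^ 2 / (2 * σ ^ 2)) * gaussianPDFReal (a + t) v y := by
    apply setIntegral_mono_on
    · exact (integrable_gaussianPDFReal _ _).restrict
    · exact ((integrable_gaussianPDFReal _ _).const_mul _).restrict
    · exact measurableSet_Ici
    · intro y hy
      simp only [mem_Ici] at hy
      simp only [gaussianPDFReal, NNReal.coe_mk, nnreal_coe_mk', hv]
      rw [mul_comm (Real.exp (-t ^ 2 / (2 * σ ^ 2))) _, mul_assoc _ _ (Real.exp (-t ^ 2 / (2 * σ ^ 2))), ← Real.exp_add]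
      apply mul_le_mul_of_nonneg_left _ (by positivity)
      apply Real.exp_le_exp.2
      have h2 : (0:ℝ) < 2 * σ ^ 2 := by positivity
      rw [div_add_div _ _ h2.ne' h2.ne', div_le_div_iff₀ h2 (by positivity)]
      have hyat : (0:ℝ) ≤ y - (a + t) := sub_nonneg.2 hy
      nlinarith [mul_nonneg (mul_nonneg ht hyat) (mul_pos h2 h2).le,
        mul_nonneg (mul_nonneg ht hyat) h2.le]
  calc ∫ y in Ici (a + t), gaussianPDFReal a v y
      ≤ ∫ y in Ici (a + t), Real.exp (-t ^ 2 / (2 * σ ^ 2)) * gaussianPDFReal (a + t) v y := key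
    _ = Real.exp (-t ^ 2 / (2 * σ ^ 2)) * ∫ y in Ici (a + t), gaussianPDFReal (a + t) v y :=
        integral_const_mul _ _
    _ = Real.exp (-t ^ 2 / (2 * σ ^ 2)) * (1 / 2) := by rw [gauss_half (a + t) σ hσ]
    _ = Real.exp (-t ^ 2 / (2 * σ ^ 2)) / 2 := by ring

-- interval bound

open Set in
lemma gauss_Ici_lower (a σ u : ℝ) (hσ : 0 < σ) (hu : 0 ≤ u) :
    gaussianReal a (⟨σ ^ 2, sq_nonneg σ⟩ : NNReal) (Ici (a - u))
      ≤ ENNReal.ofReal (1 / 2 + u * (Real.sqrt (2 * Real.pi * σ ^ 2))⁻¹) := by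
  set v : NNReal := ⟨σ ^ 2, sq_nonneg σ⟩ with hv
  have hsub : Ici (a - u) ⊆ Ico (a - u) a ∪ Ici a := by
    intro y hy
    rcases lt_or_ge y a with h | h
    · exact Or.inl ⟨hy, h⟩
    · exact Or.inr h
  calc gaussianReal a v (Ici (a - u))
      ≤ gaussianReal a v (Ico (a - u) a ∪ Ici a) := measure_mono hsub
    _ ≤ gaussianReal a v (Ico (a - u) a) + gaussianReal a v (Ici a) := measure_union_le _ _
    _ ≤ ENNReal.ofReal (u * (Real.sqrt (2 * Real.pi * σ ^ 2))⁻¹) + ENNReal.ofReal (1 / 2) := by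
        gcongr
        · rw [gaussianReal_apply_eq_integral _ (var_ne σ hσ)]
          apply ENNReal.ofReal_le_ofReal
          have hb : ∫ y in Ico (a - u) a, gaussianPDFReal a v y
              ≤ ∫ _ in Ico (a - u) a, (Real.sqrt (2 * Real.pi * σ ^ 2))⁻¹ := by
            apply setIntegral_mono_on
            · exact (integrable_gaussianPDFReal _ _).restrict
            · exact integrableOn_const measure_Ico_lt_top.ne
            · exact measurableSet_Ico
            · intro y _
              simp only [gaussianPDFReal, NNReal.coe_mk, nnreal_coe_mk', hv]
              nth_rewrite 2 [← mul_one ((Real.sqrt (2 * Real.pi * σ ^ 2))⁻¹)]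
              apply mul_le_mul_of_nonneg_left _ (by positivity)
              rw [Real.exp_le_one_iff]
              have : (0:ℝ) < 2 * σ ^ 2 := by positivity
              apply div_nonpos_of_nonpos_of_nonneg (by nlinarith [sq_nonneg (y - a)]) this.le
          calc _ ≤ _ := hb
            _ ≤ u * (Real.sqrt (2 * Real.pi * σ ^ 2))⁻¹ := by
                rw [setIntegral_const, Real.volume_real_Ico, smul_eq_mul,
                  max_eq_left (by linarith : (0:ℝ) ≤ a - (a - u))]
                apply mul_le_mul_of_nonneg_right (by linarith) (by positivity)
        · exact le_of_eq (gauss_Ici_self a σ hσ)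
    _ = ENNReal.ofReal (1 / 2 + u * (Real.sqrt (2 * Real.pi * σ ^ 2))⁻¹) := by
        rw [← ENNReal.ofReal_add (by positivity) (by norm_num)]
        ring_nf

open Set in
lemma gauss_neg (m : ℝ) (v : NNReal) {A : Set ℝ} (hA : MeasurableSet A) :
    gaussianReal m v ((fun y : ℝ => -y) ⁻¹' A) = gaussianReal (-m) v A := by
  have hmap := gaussianReal_map_const_mul (μ := m) (v := v) (-1)
  have h1 : (NNReal.mk ((-1:ℝ) ^ 2) (sq_nonneg _)) = 1 := by
    ext; norm_num
  rw [h1, one_mul, neg_one_mul] at hmap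
  have hfun : (fun y : ℝ => -y) = (fun y : ℝ => (-1 : ℝ) * y) := by funext y; ring
  rw [hfun, ← hmap, Measure.map_apply (measurable_const_mul (-1)) hA]

open Set in
set_option maxHeartbeats 1000000 in
lemma tail_delta (a σ ε δ t : ℝ) (hσ : 0 < σ) (hε0 : 0 < ε) (hε1 : ε < 1)
    (hδ0 : 0 < δ) (hδ1 : δ < 1)
    (ht : σ * (Real.sqrt (2 * Real.log (1.25 / δ)) -
      ε / (2 * Real.sqrt (2 * Real.log (1.25 / δ)))) ≤ t) :
    gaussianReal a (⟨σ ^ 2, sq_nonneg σ⟩ : NNReal) (Ici (a + t)) ≤ ENNReal.ofReal δ := by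
  set L := Real.log (1.25 / δ) with hLdef
  have hL : 0 < L := Real.log_pos (by rw [lt_div_iff₀ hδ0]; linarith)
  set s := Real.sqrt (2 * L) with hsdef
  have hs : 0 < s := Real.sqrt_pos.2 (by linarith)
  have hs2 : s ^ 2 = 2 * L := Real.sq_sqrt (by linarith)
  have heL : Real.exp L = 1.25 / δ := Real.exp_log (by positivity)
  have he1 : Real.exp 1 = Real.exp (1/2) * Real.exp (1/2) := by
    rw [← Real.exp_add]; norm_num
  have he2b : Real.exp (1/2 : ℝ) ≤ 1.649 := by
    by_contra h
    push_neg at h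
    have h2 : (1.649:ℝ)*1.649 ≤ Real.exp (1/2) * Real.exp (1/2) :=
      mul_le_mul h.le h.le (by norm_num) (Real.exp_pos _).le
    rw [← he1] at h2
    have := Real.exp_one_lt_d9
    norm_num at h2
    linarith
  have he2 : Real.exp (1/2 : ℝ) ≤ 2.5 := le_trans he2b (by norm_num)
  rcases le_or_gt 0 t with ht0 | ht0
  · rcases le_or_gt (1/2 : ℝ) δ with hδ2 | hδ2
    · calc gaussianReal a (⟨σ ^ 2, sq_nonneg σ⟩ : NNReal) (Ici (a + t))
          ≤ gaussianReal a (⟨σ ^ 2, sq_nonneg σ⟩ : NNReal) (Ici a) :=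
            measure_mono (Ici_subset_Ici.2 (by linarith))
        _ = ENNReal.ofReal (1/2) := gauss_Ici_self a σ hσ
        _ ≤ ENNReal.ofReal δ := ENNReal.ofReal_le_ofReal hδ2
    · have hL2 : 1/2 ≤ L := by
        rw [hLdef, Real.le_log_iff_exp_le (by positivity)]
        calc Real.exp (1/2 : ℝ) ≤ 2.5 := he2
          _ ≤ 1.25/δ := by rw [le_div_iff₀ hδ0]; nlinarith
      have hεs : ε / (2*s) ≤ s := by
        rw [div_le_iff₀ (by positivity)]
        nlinarith
      have hpos : 0 ≤ s - ε/(2*s) := by linarith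
      have ht2 : L - 1/2 ≤ t^2/(2*σ^2) := by
        have h1 : σ^2 * (s - ε/(2*s))^2 ≤ t^2 := by
          nlinarith [mul_nonneg hσ.le hpos]
        have h2 : 2*L - 1 ≤ (s - ε/(2*s))^2 := by
          have hcalc : (s - ε/(2*s))^2 = s^2 - ε + (ε/(2*s))^2 := by
            field_simp; ring
          nlinarith [sq_nonneg (ε/(2*s))]
        rw [le_div_iff₀ (by positivity)]
        nlinarith [sq_nonneg σ]
      refine (gauss_tail a σ t hσ ht0).trans (ENNReal.ofReal_le_ofReal ?_)
      have hmono : Real.exp (-t^2/(2*σ^2)) ≤ Real.exp (1/2 - L) := by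
        apply Real.exp_le_exp.2
        have h2σ : (0:ℝ) < 2*σ^2 := by positivity
        rw [neg_div]
        linarith
      have hval : Real.exp ((1:ℝ)/2 - L) = Real.exp (1/2) * (δ / 1.25) := by
        rw [Real.exp_sub, heL]
        field_simp
      calc Real.exp (-t^2/(2*σ^2)) / 2 ≤ Real.exp ((1:ℝ)/2 - L) / 2 := by linarith
        _ = Real.exp (1/2) * (δ/1.25) / 2 := by rw [hval]
        _ ≤ 2.5 * (δ/1.25) / 2 := by
            have h := mul_le_mul_of_nonneg_right he2 (by positivity : (0:ℝ) ≤ δ/1.25)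
            linarith
        _ = δ := by ring
  · -- t < 0
    have hneg : s - ε/(2*s) < 0 := by
      by_contra h
      push_neg at h
      exact absurd (le_trans (mul_nonneg hσ.le h) ht) (not_le.2 ht0)
    have hsε : 2 * s^2 < ε := by
      have h1 : s < ε/(2*s) := by linarith
      rw [lt_div_iff₀ (by positivity)] at h1
      have : s*(2*s) = 2*s^2 := by ring
      linarith
    have hL4 : L < 1/4 := by linarith [hs2]
    have he12 : Real.exp (1/2 : ℝ) = Real.exp (1/4) * Real.exp (1/4) := by
      rw [← Real.exp_add]; norm_num
    have he4 : Real.exp (1/4 : ℝ) ≤ 1.29 := by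
      by_contra h
      push_neg at h
      have h2 : (1.29:ℝ)*1.29 ≤ Real.exp (1/4) * Real.exp (1/4) :=
        mul_le_mul h.le h.le (by norm_num) (Real.exp_pos _).le
      rw [← he12] at h2
      norm_num at h2
      linarith
    have hδbig : (0.96:ℝ) ≤ δ := by
      have hδeq : δ = 1.25 * Real.exp (-L) := by
        rw [Real.exp_neg, heL]
        field_simp
      have hmle : Real.exp (-(1/4:ℝ)) ≤ Real.exp (-L) := Real.exp_le_exp.2 (by linarith)
      have hinv : (1.29:ℝ)⁻¹ ≤ Real.exp (-(1/4:ℝ)) := by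
        rw [Real.exp_neg]
        exact inv_anti₀ (Real.exp_pos _) he4
      rw [hδeq]
      nlinarith
    -- lower bound on s
    have hlog125 : (0.2:ℝ) ≤ Real.log 1.25 := by
      have h08 : Real.log 0.8 ≤ -(0.2:ℝ) := by
        have := Real.log_le_sub_one_of_pos (show (0:ℝ) < 0.8 by norm_num)
        linarith
      have : Real.log 1.25 = - Real.log 0.8 := by
        rw [← Real.log_inv]; norm_num
      linarith
    have hLlow : (0.2:ℝ) ≤ L := by
      refine hlog125.trans ?_
      rw [hLdef]
      apply Real.log_le_log (by norm_num)
      rw [le_div_iff₀ hδ0]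
      nlinarith
    have hs63 : (0.63:ℝ) ≤ s := by
      rw [hsdef]
      rw [show (0.63:ℝ) = Real.sqrt (0.63^2) from (Real.sqrt_sq (by norm_num)).symm]
      apply Real.sqrt_le_sqrt
      nlinarith
    have hu : -t ≤ σ / (2*s) := by
      have h1 : -t ≤ σ * (ε/(2*s) - s) := by nlinarith
      have h3' : ε/(2*s) ≤ 1/(2*s) := by gcongr
      have h2 : σ * (ε/(2*s) - s) ≤ σ * (1/(2*s)) := by
        apply mul_le_mul_of_nonneg_left _ hσ.le
        linarith
      have h4 : σ * (1/(2*s)) = σ/(2*s) := by ring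
      linarith
    have hIci : a + t = a - (-t) := by ring
    rw [hIci]
    refine (gauss_Ici_lower a σ (-t) hσ (by linarith)).trans (ENNReal.ofReal_le_ofReal ?_)
    have hsqrt : Real.sqrt (2*Real.pi*σ^2) = Real.sqrt (2*Real.pi) * σ := by
      rw [Real.sqrt_mul (by positivity), Real.sqrt_sq hσ.le]
    have hsqrt2 : (2.5:ℝ) ≤ Real.sqrt (2*Real.pi) := by
      rw [show (2.5:ℝ) = Real.sqrt (2.5^2) from (Real.sqrt_sq (by norm_num)).symm]
      apply Real.sqrt_le_sqrt
      nlinarith [Real.pi_gt_d6]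
    have hkey : (-t) * (Real.sqrt (2*Real.pi*σ^2))⁻¹ ≤ 0.32 := by
      rw [hsqrt, mul_inv]
      have e1 : (-t) * ((Real.sqrt (2*Real.pi))⁻¹ * σ⁻¹)
          = ((-t) * σ⁻¹) * (Real.sqrt (2*Real.pi))⁻¹ := by ring
      rw [e1]
      have hts : (-t) * σ⁻¹ ≤ 1/(2*s) := by
        rw [← div_eq_mul_inv, div_le_div_iff₀ hσ (by positivity)]
        have h5 := (le_div_iff₀ (by positivity : (0:ℝ) < 2*s)).1 hu
        linarith
      have hinv2 : (Real.sqrt (2*Real.pi))⁻¹ ≤ 1/2.5 := by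
        have := inv_anti₀ (by norm_num : (0:ℝ) < 2.5) hsqrt2
        norm_num at this ⊢
        linarith
      have hts0 : (0:ℝ) ≤ (-t) * σ⁻¹ := mul_nonneg (by linarith) (inv_nonneg.2 hσ.le)
      calc ((-t) * σ⁻¹) * (Real.sqrt (2*Real.pi))⁻¹ ≤ (1/(2*s)) * (1/2.5) := by
            apply mul_le_mul hts hinv2 (by positivity) (by positivity)
        _ ≤ (1/(2*0.63)) * (1/2.5) := by
            gcongr
        _ ≤ 0.32 := by norm_num
    linarith [hkey, hδbig]

open Set in
lemma pdf_ratio (σ ε m c y : ℝ) (hσ : 0 < σ) (hcond : c^2 - 2*c*(y-m) ≤ 2*σ^2*ε) :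
    gaussianPDFReal m (⟨σ ^ 2, sq_nonneg σ⟩ : NNReal) y
      ≤ Real.exp ε * gaussianPDFReal (m+c) (⟨σ ^ 2, sq_nonneg σ⟩ : NNReal) y := by
  simp only [gaussianPDFReal, NNReal.coe_mk, nnreal_coe_mk']
  rw [mul_comm (Real.exp ε), mul_assoc _ _ (Real.exp ε), ← Real.exp_add]
  apply mul_le_mul_of_nonneg_left _ (by positivity)
  apply Real.exp_le_exp.2
  have h2 : (0:ℝ) < 2*σ^2 := by positivity
  have hkey : (-(y-(m+c))^2/(2*σ^2) + ε) - (-(y-m)^2/(2*σ^2))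
      = (2*σ^2*ε - (c^2 - 2*c*(y-m)))/(2*σ^2) := by
    field_simp
    ring
  have hnn : (0:ℝ) ≤ (2*σ^2*ε - (c^2 - 2*c*(y-m)))/(2*σ^2) :=
    div_nonneg (by linarith) h2.le
  linarith

open Set in
set_option maxHeartbeats 1000000 in
/-- Gaussian mechanism (one-dimensional): for a query `f` with sensitivity `Δ` on
adjacent datasets and `σ ≥ Δ·√(2 ln(1.25/δ))/ε`, adding `N(0, σ²)` noise gives
`(ε, δ)`-differential privacy, for `ε ∈ (0,1)`. -/
theorem gaussian_mechanism_dp {D : Type*} (Adj : D → D → Prop) (f : D → ℝ)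
    (Δ ε δ σ : ℝ) (hε0 : 0 < ε) (hε1 : ε < 1) (hδ0 : 0 < δ) (hδ1 : δ < 1)
    (hsens : ∀ x x', Adj x x' → |f x - f x'| ≤ Δ)
    (hσ : σ ≥ Δ * Real.sqrt (2 * Real.log (1.25 / δ)) / ε)
    (x x' : D) (hadj : Adj x x') :
    ∀ S : Set ℝ, MeasurableSet S →
      gaussianReal (f x) (⟨σ ^ 2, sq_nonneg σ⟩ : NNReal) S ≤
        ENNReal.ofReal (Real.exp ε) *
            gaussianReal (f x') (⟨σ ^ 2, sq_nonneg σ⟩ : NNReal) S +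
          ENNReal.ofReal δ := by
  intro S hS
  by_cases hceq : f x = f x'
  · rw [hceq]
    calc gaussianReal (f x') (⟨σ ^ 2, sq_nonneg σ⟩ : NNReal) S
        ≤ ENNReal.ofReal (Real.exp ε) * gaussianReal (f x') (⟨σ ^ 2, sq_nonneg σ⟩ : NNReal) S := by
          nth_rewrite 1 [← one_mul (gaussianReal (f x') (⟨σ ^ 2, sq_nonneg σ⟩ : NNReal) S)]
          exact mul_le_mul_left (ENNReal.one_le_ofReal.2 (Real.one_le_exp hε0.le)) _
      _ ≤ _ := le_self_add
  · set c : ℝ := f x' - f x with hcdef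
    clear_value c
    have hcne : c ≠ 0 := by rw [hcdef]; exact sub_ne_zero.2 (Ne.symm hceq)
    have hΔc : |c| ≤ Δ := by rw [hcdef, abs_sub_comm]; exact hsens x x' hadj
    have hcabs : 0 < |c| := abs_pos.2 hcne
    have hΔpos : 0 < Δ := lt_of_lt_of_le hcabs hΔc
    have hL : 0 < Real.log (1.25 / δ) := Real.log_pos (by rw [lt_div_iff₀ hδ0]; linarith)
    set s : ℝ := Real.sqrt (2 * Real.log (1.25 / δ)) with hsdef
    have hs : 0 < s := Real.sqrt_pos.2 (by linarith)
    have hσpos : 0 < σ :=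
      lt_of_lt_of_le (by positivity : (0:ℝ) < Δ * s / ε) hσ
    have hv := var_ne σ hσpos
    have hcs : |c| ≤ σ * ε / s := by
      rw [le_div_iff₀ hs]
      have h1 : Δ * s ≤ σ * ε := (div_le_iff₀ hε0).1 hσ
      have h2 : |c| * s ≤ Δ * s := mul_le_mul_of_nonneg_right hΔc hs.le
      linarith
    set t : ℝ := (σ^2*ε - c^2/2)/|c| with htdef
    clear_value t
    have htexp : t = σ^2*ε/|c| - |c|/2 := by
      rw [htdef, sub_div]
      congr 1
      field_simp
      rw [← sq_abs c]
    have htlow : σ * (s - ε/(2*s)) ≤ t := by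
      have e2 : σ^2*ε/(σ*ε/s) = σ*s := by field_simp
      have h3 : σ^2*ε/(σ*ε/s) ≤ σ^2*ε/|c| := by gcongr
      have h4 : |c|/2 ≤ (σ*ε/s)/2 := by linarith
      have e3 : (σ*ε/s)/2 = σ*(ε/(2*s)) := by field_simp
      rw [htexp]
      nlinarith [e2, h3, h4, e3]
    -- construct bad set
    obtain ⟨B, hBmeas, hBout, hBle⟩ : ∃ B : Set ℝ, MeasurableSet B ∧
        (∀ y, y ∉ B → c^2 - 2*c*(y - f x) ≤ 2*σ^2*ε) ∧
        gaussianReal (f x) (⟨σ ^ 2, sq_nonneg σ⟩ : NNReal) B ≤ ENNReal.ofReal δ := by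
      rcases lt_or_gt_of_ne hcne with hcneg | hcpos2
      · -- c < 0 : B = Ioi (f x + t)
        refine ⟨Ioi (f x + t), measurableSet_Ioi, ?_, ?_⟩
        · intro y hy
          simp only [mem_Ioi, not_lt] at hy
          have habs : |c| = -c := abs_of_neg hcneg
          have hct : t * (-c) = σ^2*ε - c^2/2 := by
            rw [htdef, habs]; field_simp
          nlinarith [mul_le_mul_of_nonneg_right (by linarith : y - f x ≤ t) (by linarith : (0:ℝ) ≤ -c)]
        · refine le_trans (measure_mono Ioi_subset_Ici_self) ?_
          exact tail_delta (f x) σ ε δ t hσpos hε0 hε1 hδ0 hδ1 htlow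
      · -- c > 0 : B = Iio (f x - t)
        refine ⟨Iio (f x - t), measurableSet_Iio, ?_, ?_⟩
        · intro y hy
          simp only [mem_Iio, not_lt] at hy
          have habs : |c| = c := abs_of_pos hcpos2
          have hct : t * c = σ^2*ε - c^2/2 := by
            rw [htdef, habs]; field_simp
          nlinarith [mul_le_mul_of_nonneg_right (by linarith : -t ≤ y - f x) (by linarith : (0:ℝ) ≤ c)]
        · have hsub : Iio (f x - t) ⊆ (fun y : ℝ => -y) ⁻¹' (Ici (-(f x) + t)) := by
            intro y hy
            simp only [mem_Iio] at hy
            simp only [mem_preimage, mem_Ici]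
            linarith
          refine le_trans (measure_mono hsub) ?_
          refine (gauss_neg (f x) _ measurableSet_Ici).le.trans ?_
          exact tail_delta (-(f x)) σ ε δ t hσpos hε0 hε1 hδ0 hδ1 htlow
    -- combine
    have hm' : f x' = f x + c := by rw [hcdef]; ring
    have main : gaussianReal (f x) (⟨σ ^ 2, sq_nonneg σ⟩ : NNReal) (S ∩ Bᶜ)
        ≤ ENNReal.ofReal (Real.exp ε) * gaussianReal (f x') (⟨σ ^ 2, sq_nonneg σ⟩ : NNReal) S := by
      rw [gaussianReal_apply _ hv, gaussianReal_apply _ hv]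
      calc ∫⁻ y in S ∩ Bᶜ, gaussianPDF (f x) (⟨σ ^ 2, sq_nonneg σ⟩ : NNReal) y
          ≤ ∫⁻ y in S ∩ Bᶜ, ENNReal.ofReal (Real.exp ε)
              * gaussianPDF (f x') (⟨σ ^ 2, sq_nonneg σ⟩ : NNReal) y := by
            apply setLIntegral_mono ((measurable_gaussianPDF _ _).const_mul _)
            intro y hy
            show ENNReal.ofReal _ ≤ ENNReal.ofReal _ * ENNReal.ofReal _
            rw [← ENNReal.ofReal_mul (Real.exp_nonneg ε)]
            apply ENNReal.ofReal_le_ofReal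
            rw [hm']
            exact pdf_ratio σ ε (f x) c y hσpos (hBout y hy.2)
        _ = ENNReal.ofReal (Real.exp ε)
              * ∫⁻ y in S ∩ Bᶜ, gaussianPDF (f x') (⟨σ ^ 2, sq_nonneg σ⟩ : NNReal) y :=
            lintegral_const_mul _ (measurable_gaussianPDF _ _)
        _ ≤ ENNReal.ofReal (Real.exp ε)
              * ∫⁻ y in S, gaussianPDF (f x') (⟨σ ^ 2, sq_nonneg σ⟩ : NNReal) y := by
            apply mul_le_mul_right
            exact lintegral_mono' (Measure.restrict_mono inter_subset_left le_rfl) le_rfl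
    calc gaussianReal (f x) (⟨σ ^ 2, sq_nonneg σ⟩ : NNReal) S
        ≤ gaussianReal (f x) (⟨σ ^ 2, sq_nonneg σ⟩ : NNReal) ((S ∩ Bᶜ) ∪ B) := by
          apply measure_mono
          intro y hy
          by_cases hb : y ∈ B
          · exact Or.inr hb
          · exact Or.inl ⟨hy, hb⟩
      _ ≤ gaussianReal (f x) (⟨σ ^ 2, sq_nonneg σ⟩ : NNReal) (S ∩ Bᶜ)
            + gaussianReal (f x) (⟨σ ^ 2, sq_nonneg σ⟩ : NNReal) B := measure_union_le _ _
      _ ≤ ENNReal.ofReal (Real.exp ε) * gaussianReal (f x') (⟨σ ^ 2, sq_nonneg σ⟩ : NNReal) S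
            + ENNReal.ofReal δ := add_le_add main hBle
end

section
/- Shamir secret sharing perfect privacy: for any t−1 distinct nonzero evaluation points x_1,…,x_{t−1} in a finite field F and any secret s ∈ F, if the other t−1 coefficients of the degree-< t polynomial f with f(0)=s are chosen uniformly at random, then the vector of shares (f(x_1),…,f(x_{t−1})) is uniformly distributed on F^{t−1}, independent of s. -/
lemma pmf_map_equiv_uniform {α β : Type*} [Fintype α] [Fintype β] [Nonempty α] [Nonempty β]
    (e : α ≃ β) :
    (PMF.uniformOfFintype α).map e = PMF.uniformOfFintype β := by
  classical
  ext b
  rw [PMF.map_apply]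
  have h : ∀ a : α, (if b = e a then (PMF.uniformOfFintype α) a else 0)
      = if a = e.symm b then (PMF.uniformOfFintype α) (e.symm b) else 0 := by
    intro a
    by_cases hab : a = e.symm b
    · subst hab; simp
    · have : b ≠ e a := by
        intro hb; exact hab (by simp [hb])
      simp [hab, this]
  simp_rw [h]
  rw [tsum_ite_eq]
  simp [PMF.uniformOfFintype_apply, Fintype.card_congr e]

/-- Shamir secret sharing perfect privacy: with `f(X) = s + a_1 X + … + a_{t-1} X^{t-1}`
and `a_1, …, a_{t-1}` i.i.d. uniform on a finite field `F`, the vector of shares at any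
`t - 1` distinct nonzero points is uniform on `F^{t-1}`, independent of the secret `s`. -/
theorem shamir_privacy {F : Type*} [Field F] [Fintype F] [DecidableEq F]
    (t : ℕ) (ht : 1 ≤ t) (x : Fin (t - 1) → F)
    (hx : Function.Injective x) (hx0 : ∀ i, x i ≠ 0) (s : F) :
    (PMF.uniformOfFintype (Fin (t - 1) → F)).map
        (fun a => fun i => s + ∑ m : Fin (t - 1), a m * x i ^ ((m : ℕ) + 1)) =
      PMF.uniformOfFintype (Fin (t - 1) → F) := by
  set M : Matrix (Fin (t - 1)) (Fin (t - 1)) F :=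
    Matrix.of (fun i m => x i ^ ((m : ℕ) + 1)) with hM
  have hMeq : M = Matrix.diagonal x * Matrix.vandermonde x := by
    ext i m
    simp [hM, Matrix.mul_apply, Matrix.diagonal, Matrix.vandermonde, pow_succ, mul_comm]
  have hdet : M.det ≠ 0 := by
    rw [hMeq, Matrix.det_mul, Matrix.det_diagonal, Matrix.det_vandermonde]
    apply mul_ne_zero
    · exact Finset.prod_ne_zero_iff.mpr fun i _ => hx0 i
    · refine Finset.prod_ne_zero_iff.mpr fun i _ => ?_
      refine Finset.prod_ne_zero_iff.mpr fun j hj => ?_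
      have hij : i ≠ j := by
        intro h; subst h; simp at hj
      exact sub_ne_zero.mpr fun h => hij (hx h.symm)
  have hdetU : IsUnit M.det := isUnit_iff_ne_zero.mpr hdet
  set g : (Fin (t - 1) → F) → (Fin (t - 1) → F) :=
    fun a => fun i => s + ∑ m : Fin (t - 1), a m * x i ^ ((m : ℕ) + 1) with hg
  have hmv : ∀ a, g a = fun i => s + M.mulVec a i := by
    intro a
    funext i
    simp only [hg, Matrix.mulVec, dotProduct, hM, Matrix.of_apply]
    congr 1
    exact Finset.sum_congr rfl fun m _ => mul_comm _ _
  have hinj : Function.Injective g := by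
    intro a b hab
    rw [hmv a, hmv b] at hab
    have hmv' : M.mulVec a = M.mulVec b := by
      funext i
      have := congrFun hab i
      simpa using this
    have := congrArg (M⁻¹.mulVec) hmv'
    rwa [Matrix.mulVec_mulVec, Matrix.mulVec_mulVec, Matrix.nonsing_inv_mul M hdetU,
      Matrix.one_mulVec, Matrix.one_mulVec] at this
  have hbij : Function.Bijective g := (Finite.injective_iff_bijective).mp hinj
  have := pmf_map_equiv_uniform (Equiv.ofBijective g hbij)
  simpa [Equiv.ofBijective] using this
end
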